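/- arXiv:2210.11814 — 5 statements merged into one kernel-verified Lean document; each statement's English description precedes it below -/
import Mathlib

section
/- In the coupon collector process with N coupons, conditionally on X_m = ℓ, the time-reversed process is a Markov chain whose transition probabilities from state (n,k) to (n-1,k-1) equal S2(n-1,k-1)/S2(n,k) and to (n-1,k) equal k·S2(n-1,k)/S2(n,k); in particular these do not depend on N. -/
open Finset

/-- Stirling numbers of the second kind. -/
def S2 : ℕ → ℕ → ℕ
  | 0, 0 => 1
  | 0, _ + 1 => 0
  | _ + 1, 0 => 0
  | n + 1, k + 1 => S2 n k + (k + 1) * S2 n (k + 1)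

/-- Number of distinct coupons collected after the first `n` of `m` uniform draws. -/
def coupons (N m : ℕ) (n : ℕ) (f : Fin m → Fin N) : ℕ :=
  ((univ.filter fun i : Fin m => (i : ℕ) < n).image f).card

/-!
Split a sequence of `m` draws into its first `n` draws (the head) and the remaining `m - n`
(the tail). Relabelling the coupons by a permutation shows that the number of tails completing a
set `s` of coupons to `ℓ` coupons depends only on `#s`. Every event of the statement constrains
the head only through the images of its prefixes, which have `k` elements, so its cardinality
factors as (number of admissible heads) × (that tail count).

The maps `Fin r → Fin N` with image of size `j` number `S2 r j · N (N - 1) ⋯ (N - j + 1)`, since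
the last draw either repeats one of the `j` coupons of the earlier ones or is one of `N - j` new
ones; this is the recurrence of `S2`. The same dichotomy counts the heads whose last draw is new,
`S2 (n - 1) (k - 1) · N ⋯ (N - k + 2) · (N - k + 1)`, and those whose last draw is a repeat,
`S2 (n - 1) k · N ⋯ (N - k + 1) · k`. The falling factorial and the tail count cancel in the
ratios.
-/

lemma card_filter_prod_and {A B : Type*} [Fintype A] [Fintype B] (P : A → Prop)
    [DecidablePred P] (R : A → B → Prop) [∀ a, DecidablePred (R a)] :
    #{z : A × B | P z.1 ∧ R z.1 z.2} = ∑ a with P a, #{b | R a b} := by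
  simp only [card_filter, ← univ_product_univ, sum_product, sum_filter, ite_and]
  exact sum_congr rfl fun a _ => by split_ifs <;> simp

section ImageCount

variable {α : Type*} [DecidableEq α]

lemma image_univ_eq_insert_init {p : ℕ} (g : Fin (p + 1) → α) :
    univ.image g = insert (g (Fin.last p)) (univ.image (Fin.init g)) := by
  ext x
  simp [Fin.exists_fin_succ', Fin.init, or_comm, eq_comm]

lemma image_univ_eq_union_castAdd_natAdd {n r : ℕ} (f : Fin (n + r) → α) :
    univ.image f
      = univ.image (fun i => f (Fin.castAdd r i)) ∪ univ.image (fun i => f (Fin.natAdd n i)) := by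
  ext x
  simp only [mem_image, mem_univ, true_and, mem_union]
  constructor
  · rintro ⟨i, rfl⟩
    cases i using Fin.addCases <;> simp
  · rintro (⟨i, rfl⟩ | ⟨i, rfl⟩) <;> exact ⟨_, rfl⟩

variable [Fintype α]

lemma card_filter_card_insert_eq_card (s : Finset α) : #{a | #(insert a s) = #s} = #s := by
  congr 1
  ext a
  by_cases ha : a ∈ s <;> simp [ha, card_insert_of_notMem]

lemma card_filter_card_insert_eq_card_add_one (s : Finset α) :
    #{a | #(insert a s) = #s + 1} = Fintype.card α - #s := by
  rw [← card_compl]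
  congr 1
  ext a
  by_cases ha : a ∈ s <;> simp [ha, card_insert_of_notMem]

lemma card_filter_init_and {p : ℕ} (P : (Fin p → α) → Prop) [DecidablePred P]
    (Q : Finset α → Prop) [DecidablePred Q] :
    #{g : Fin (p + 1) → α | P (Fin.init g) ∧ Q (univ.image g)}
      = ∑ h with P h, #{a | Q (insert a (univ.image h))} := by
  rw [← card_filter_prod_and]
  refine card_equiv ((Equiv.prodComm _ _).trans (Fin.snocEquiv fun _ => α)).symm fun g => ?_
  simp [image_univ_eq_insert_init g]

lemma card_filter_card_image_init_eq_and_eq (p j : ℕ) :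
    #{g : Fin (p + 1) → α | #(univ.image (Fin.init g)) = j ∧ #(univ.image g) = j}
      = #{h : Fin p → α | #(univ.image h) = j} * j := by
  rw [card_filter_init_and (fun h => #(univ.image h) = j) (fun s => #s = j), ← smul_eq_mul,
    ← sum_const]
  refine sum_congr rfl fun h hh => ?_
  rw [(mem_filter.1 hh).2.symm]
  exact card_filter_card_insert_eq_card _

lemma card_filter_card_image_init_eq_and_eq_add_one (p j : ℕ) :
    #{g : Fin (p + 1) → α | #(univ.image (Fin.init g)) = j ∧ #(univ.image g) = j + 1}
      = #{h : Fin p → α | #(univ.image h) = j} * (Fintype.card α - j) := by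
  rw [card_filter_init_and (fun h => #(univ.image h) = j) (fun s => #s = j + 1), ← smul_eq_mul,
    ← sum_const]
  refine sum_congr rfl fun h hh => ?_
  rw [(mem_filter.1 hh).2.symm]
  exact card_filter_card_insert_eq_card_add_one _

lemma card_filter_card_image_succ_eq_add (p j : ℕ) :
    #{g : Fin (p + 1) → α | #(univ.image g) = j + 1}
      = #{g : Fin (p + 1) → α | #(univ.image (Fin.init g)) = j + 1 ∧ #(univ.image g) = j + 1}
        + #{g : Fin (p + 1) → α |
            #(univ.image (Fin.init g)) = j ∧ #(univ.image g) = j + 1} := by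
  rw [← card_union_of_disjoint (disjoint_filter.2 fun g _ h₁ h₂ => by omega), ← filter_or]
  congr 1
  ext g
  have h₁ : #(univ.image (Fin.init g)) ≤ #(univ.image g) := by
    rw [image_univ_eq_insert_init g]
    exact card_le_card (subset_insert _ _)
  have h₂ : #(univ.image g) ≤ #(univ.image (Fin.init g)) + 1 := by
    rw [image_univ_eq_insert_init g]
    exact card_insert_le _ _
  simp only [mem_filter, mem_univ, true_and]
  omega

theorem card_filter_card_image_eq (r j : ℕ) :
    #{g : Fin r → α | #(univ.image g) = j} = S2 r j * (Fintype.card α).descFactorial j := by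
  induction r generalizing j with
  | zero => cases j <;> simp [S2, univ_eq_empty]
  | succ p ih =>
    cases j with
    | zero => simp [S2, univ_nonempty.ne_empty]
    | succ j =>
      rw [card_filter_card_image_succ_eq_add, card_filter_card_image_init_eq_and_eq,
        card_filter_card_image_init_eq_and_eq_add_one, ih, ih, S2, Nat.descFactorial_succ]
      ring

end ImageCount

section TailCount

variable {α : Type*} [Fintype α] [DecidableEq α]

def tailCount (s : Finset α) (r ℓ : ℕ) : ℕ := #{t : Fin r → α | #(s ∪ univ.image t) = ℓ}

lemma tailCount_congr {s s' : Finset α} (h : #s = #s') (r ℓ : ℕ) :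
    tailCount s r ℓ = tailCount s' r ℓ := by
  obtain ⟨σ, rfl⟩ := Equiv.Perm.exists_map_finset_eq s s' h
  refine card_equiv (Equiv.arrowCongr (Equiv.refl _) σ) fun t => ?_
  have : s.map σ.toEmbedding ∪ univ.image (σ ∘ t) = (s ∪ univ.image t).image σ := by
    rw [map_eq_image, image_union, image_image]
    rfl
  simp only [mem_filter, mem_univ, true_and]
  change _ ↔ #(s.map σ.toEmbedding ∪ univ.image (σ ∘ t)) = ℓ
  rw [this, card_image_of_injective _ σ.injective]

lemma tailCount_ne_zero {s : Finset α} (hs : s.Nonempty) {r ℓ : ℕ} (hsℓ : #s ≤ ℓ)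
    (hℓ : ℓ ≤ Fintype.card α) (hr : ℓ - #s ≤ r) : tailCount s r ℓ ≠ 0 := by
  obtain ⟨u, hsu, hu⟩ := exists_superset_card_eq hsℓ hℓ
  obtain ⟨a, ha⟩ := hs
  -- the tail lists the coupons of `u \ s` and then repeats `a ∈ s`
  suffices s ∪ univ.image (fun i : Fin r => (u \ s).toList.getD i a) = u from
    card_ne_zero.2 ⟨_, mem_filter.2 ⟨mem_univ _, by rw [this, hu]⟩⟩
  refine Subset.antisymm (union_subset hsu ?_) fun x hx => ?_
  · simp only [subset_iff, mem_image, mem_univ, true_and, forall_exists_index,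
      forall_apply_eq_imp_iff]
    intro i
    rcases lt_or_ge (i : ℕ) (u \ s).toList.length with hi | hi
    · rw [List.getD_eq_getElem _ _ hi]
      exact (mem_sdiff.1 (mem_toList.1 (List.getElem_mem hi))).1
    · rw [List.getD_eq_default _ _ hi]
      exact hsu ha
  · by_cases hxs : x ∈ s
    · exact mem_union_left _ hxs
    · obtain ⟨i, hi, rfl⟩ := List.mem_iff_getElem.1 (mem_toList.2 (mem_sdiff.2 ⟨hx, hxs⟩))
      have : (u \ s).toList.length ≤ r := by
        rwa [length_toList, card_sdiff_of_subset hsu, hu]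
      exact mem_union_right _ (mem_image.2 ⟨⟨i, by omega⟩, mem_univ _, List.getD_eq_getElem _ _ hi⟩)

theorem card_filter_head_and_card_image_eq (s : Finset α) {n r ℓ : ℕ}
    (P : (Fin n → α) → Prop) [DecidablePred P] (hP : ∀ g, P g → #(univ.image g) = #s) :
    #{f : Fin (n + r) → α | P (fun i => f (Fin.castAdd r i)) ∧ #(univ.image f) = ℓ}
      = #{g | P g} * tailCount s r ℓ := by
  rw [card_equiv (Fin.appendEquiv n r).symm
      (t := {z | P z.1 ∧ #(univ.image z.1 ∪ univ.image z.2) = ℓ})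
      fun f => by simp [image_univ_eq_union_castAdd_natAdd f],
    card_filter_prod_and P fun g t => #(univ.image g ∪ univ.image t) = ℓ, ← smul_eq_mul,
    ← sum_const]
  exact sum_congr rfl fun g hg => tailCount_congr (hP g (mem_filter.1 hg).2) r ℓ

end TailCount

section Coupons

variable {N : ℕ}

lemma coupons_eq_card_image {m j : ℕ} (h : j ≤ m) (f : Fin m → Fin N) :
    coupons N m j f = #(univ.image fun i : Fin j => f (Fin.castLE h i)) := by
  unfold coupons
  congr 1
  ext x
  simp only [mem_image, mem_filter, mem_univ, true_and]
  exact ⟨fun ⟨i, hi, e⟩ => ⟨⟨i, hi⟩, e⟩, fun ⟨i, e⟩ => ⟨Fin.castLE h i, i.2, e⟩⟩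

lemma coupons_add_left {n r : ℕ} (f : Fin (n + r) → Fin N) :
    coupons N (n + r) n f = #(univ.image fun i => f (Fin.castAdd r i)) :=
  coupons_eq_card_image _ f

lemma coupons_succ_add_left {n r : ℕ} (f : Fin (n + 1 + r) → Fin N) :
    coupons N (n + 1 + r) n f = #(univ.image (Fin.init fun i => f (Fin.castAdd r i))) :=
  coupons_eq_card_image (by omega) f

lemma coupons_self {m : ℕ} (f : Fin m → Fin N) : coupons N m m f = #(univ.image f) := by
  simpa using coupons_eq_card_image le_rfl f

end Coupons

lemma cast_div_cast_eq_of_eq_mul {a b a' b' c : ℕ} (ha : a = a' * c) (hb : b = b' * c)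
    (hc : c ≠ 0) : (a : ℝ) / b = a' / b' := by
  rw [ha, hb, Nat.cast_mul, Nat.cast_mul, mul_div_mul_right _ _ (Nat.cast_ne_zero.2 hc)]

/-- Under the uniform measure on functions `Fin m → Fin N`, conditionally on `X_m = ℓ`,
the time-reversed coupon-collector chain has the transition probabilities given by the
Pascal formula for Stirling numbers of the second kind; in particular they do not
depend on `N`. (Conditional probabilities are expressed as ratios of cardinalities.) -/
theorem coupon_reversed_transitions (N m ℓ n k : ℕ) (hk : 0 < k) (hkn : k < n) (hnm : n ≤ m)
    (hkℓ : k ≤ ℓ) (hℓN : ℓ ≤ N) (hadm : ℓ - k ≤ m - n) :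
    ((univ.filter fun f : Fin m → Fin N =>
          coupons N m (n - 1) f = k - 1 ∧ coupons N m n f = k ∧ coupons N m m f = ℓ).card : ℝ) /
        ((univ.filter fun f : Fin m → Fin N =>
          coupons N m n f = k ∧ coupons N m m f = ℓ).card)
      = (S2 (n - 1) (k - 1) : ℝ) / (S2 n k) ∧
    ((univ.filter fun f : Fin m → Fin N =>
          coupons N m (n - 1) f = k ∧ coupons N m n f = k ∧ coupons N m m f = ℓ).card : ℝ) /
        ((univ.filter fun f : Fin m → Fin N =>
          coupons N m n f = k ∧ coupons N m m f = ℓ).card)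
      = (k : ℝ) * (S2 (n - 1) k) / (S2 n k) := by
  obtain ⟨p, rfl⟩ : ∃ p, n = p + 1 := ⟨n - 1, by omega⟩
  obtain ⟨j, rfl⟩ : ∃ j, k = j + 1 := ⟨k - 1, by omega⟩
  obtain ⟨r, rfl⟩ := Nat.exists_eq_add_of_le hnm
  rw [Nat.add_sub_cancel_left] at hadm
  obtain ⟨s, -, hs⟩ := exists_subset_card_eq (s := (univ : Finset (Fin N))) (n := j + 1)
    (by simpa using hkℓ.trans hℓN)
  have hc : N.descFactorial (j + 1) * tailCount s r ℓ ≠ 0 :=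
    mul_ne_zero (Nat.descFactorial_eq_zero_iff_lt.not.2 (by omega))
      (tailCount_ne_zero (card_pos.1 (by omega)) (by omega) (by simpa) (by omega))
  have hden : #{f : Fin (p + 1 + r) → Fin N |
      #(univ.image fun i => f (Fin.castAdd r i)) = j + 1 ∧ #(univ.image f) = ℓ}
      = S2 (p + 1) (j + 1) * (N.descFactorial (j + 1) * tailCount s r ℓ) := by
    rw [card_filter_head_and_card_image_eq s (fun g => #(univ.image g) = j + 1)
        (fun g hg => hs ▸ hg),
      card_filter_card_image_eq, Fintype.card_fin, mul_assoc]
  simp only [coupons_succ_add_left, coupons_add_left, coupons_self, Nat.add_sub_cancel,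
    ← and_assoc]
  rw [← Nat.cast_mul]
  constructor
  · refine cast_div_cast_eq_of_eq_mul ?_ hden hc
    rw [card_filter_head_and_card_image_eq s
        (fun g => #(univ.image (Fin.init g)) = j ∧ #(univ.image g) = j + 1) (fun g hg => hs ▸ hg.2),
      card_filter_card_image_init_eq_and_eq_add_one, card_filter_card_image_eq, Fintype.card_fin,
      Nat.descFactorial_succ]
    ring
  · refine cast_div_cast_eq_of_eq_mul ?_ hden hc
    rw [card_filter_head_and_card_image_eq s
        (fun g => #(univ.image (Fin.init g)) = j + 1 ∧ #(univ.image g) = j + 1)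
        (fun g hg => hs ▸ hg.2),
      card_filter_card_image_init_eq_and_eq, card_filter_card_image_eq, Fintype.card_fin]
    ring
end

section
/- For every λ > 0, the equation ζ/((ζ-1)·ln(1-ζ)) = 1 + λ has a unique solution ζ₃(λ) in the open interval (0,1). -/
private lemma zeta3_aux_lt (lam t1 t2 : ℝ) (h1 : 0 < t1) (hlt : t1 < t2)
    (e1 : Real.exp t1 = 1 + (1 + lam) * t1)
    (e2 : Real.exp t2 = 1 + (1 + lam) * t2) : False := by
  have ht2 : 0 < t2 := h1.trans hlt
  set b := t1 / t2 with hbdef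
  have hb : 0 < b := div_pos h1 ht2
  have hb1 : b < 1 := (div_lt_one ht2).2 hlt
  have hbt : b * t2 = t1 := div_mul_cancel₀ t1 (ne_of_gt ht2)
  have key := strictConvexOn_exp.2 (Set.mem_univ (0:ℝ)) (Set.mem_univ t2)
    (ne_of_lt ht2) (by linarith : (0:ℝ) < 1 - b) hb (by ring)
  simp only [smul_eq_mul, mul_zero, zero_add, Real.exp_zero, mul_one] at key
  rw [hbt, e1, e2] at key
  have h2 : (1 + lam) * (b * t2) = (1 + lam) * t1 := by rw [hbt]
  nlinarith [key, h2]

private lemma zeta3_t_lemma (lam : ℝ) (hlam : 0 < lam) :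
    ∃! t : ℝ, 0 < t ∧ Real.exp t = 1 + (1 + lam) * t := by
  set s : ℝ := lam / (2 * (1 + lam)) with hsdef
  set T : ℝ := 4 * lam + 1 with hTdef
  have hs0 : 0 < s := by positivity
  have hs1 : s < 1 := by
    rw [hsdef, div_lt_one (by positivity)]; linarith
  have hsT : s < T := by
    have : s < 1 := hs1
    linarith
  set f : ℝ → ℝ := fun t => Real.exp t - (1 + (1 + lam) * t) with hfdef
  have hfs : f s < 0 := by
    have h1 : (1 - s) + 1 ≤ Real.exp (-s) + 1 := by
      have := Real.add_one_le_exp (-s); linarith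
    have h2 : Real.exp s * Real.exp (-s) = 1 := by
      rw [← Real.exp_add]; simp
    have hles : Real.exp s * (1 - s) ≤ 1 := by
      nlinarith [Real.exp_pos s]
    have hkey : (1 + (1 + lam) * s) * (1 - s) > 1 := by
      have hseq : s * (2 * (1 + lam)) = lam := by
        rw [hsdef]; field_simp
      nlinarith [hs0, hs1, hlam]
    have hes : Real.exp s < 1 + (1 + lam) * s := by
      nlinarith [hs0, hs1]
    simp only [hfdef]; linarith
  have hfT : 0 < f T := by
    have h1 : T / 2 + 1 < Real.exp (T / 2) :=
      Real.add_one_lt_exp (by positivity : T / 2 ≠ 0)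
    have h2 : Real.exp T = Real.exp (T / 2) * Real.exp (T / 2) := by
      rw [← Real.exp_add]; ring_nf
    have hT0 : 0 < T := by positivity
    simp only [hfdef]
    nlinarith [h1, h2, hT0, hlam]
  have hcont : ContinuousOn f (Set.Icc s T) := by
    apply Continuous.continuousOn; continuity
  have hiv := intermediate_value_Ioo (le_of_lt hsT) hcont
  have h0mem : (0:ℝ) ∈ Set.Ioo (f s) (f T) := ⟨hfs, hfT⟩
  obtain ⟨t0, ht0mem, ht0⟩ := hiv h0mem
  have ht0pos : 0 < t0 := hs0.trans ht0mem.1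
  have ht0eq : Real.exp t0 = 1 + (1 + lam) * t0 := by
    have : Real.exp t0 - (1 + (1 + lam) * t0) = 0 := ht0
    linarith
  refine ⟨t0, ⟨ht0pos, ht0eq⟩, ?_⟩
  rintro t ⟨htpos, hteq⟩
  rcases lt_trichotomy t t0 with h | h | h
  · exact absurd (zeta3_aux_lt lam t t0 htpos h hteq ht0eq) (fun x => x)
  · exact h
  · exact absurd (zeta3_aux_lt lam t0 t ht0pos h ht0eq hteq) (fun x => x)

theorem zeta3_exists_unique (lam : ℝ) (hlam : 0 < lam) :
    ∃! z : ℝ, z ∈ Set.Ioo (0 : ℝ) 1 ∧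
      z / ((z - 1) * Real.log (1 - z)) = 1 + lam := by
  obtain ⟨t0, ⟨ht0pos, ht0eq⟩, ht0uniq⟩ := zeta3_t_lemma lam hlam
  set z0 : ℝ := 1 - Real.exp (-t0) with hz0def
  have hE0 : Real.exp (-t0) < 1 := Real.exp_lt_one_iff.2 (by linarith)
  have hE0pos : 0 < Real.exp (-t0) := Real.exp_pos _
  have hz0mem : z0 ∈ Set.Ioo (0:ℝ) 1 := ⟨by simp [hz0def]; linarith, by simp [hz0def]; linarith⟩
  have hlog0 : Real.log (1 - z0) = -t0 := by
    rw [hz0def]; simp [Real.log_exp]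
  have hmul : Real.exp t0 * Real.exp (-t0) = 1 := by rw [← Real.exp_add]; simp
  have hz0eq : z0 / ((z0 - 1) * Real.log (1 - z0)) = 1 + lam := by
    rw [hlog0, hz0def]
    have hden : ((1 - Real.exp (-t0)) - 1) * (-t0) = t0 * Real.exp (-t0) := by ring
    rw [hden, div_eq_iff (by positivity)]
    nlinarith [ht0eq, hmul]
  refine ⟨z0, ⟨hz0mem, hz0eq⟩, ?_⟩
  rintro z ⟨⟨hz0', hz1'⟩, hzeq⟩
  set t : ℝ := -Real.log (1 - z) with htdef
  have h1z : 0 < 1 - z := by linarith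
  have hlogneg : Real.log (1 - z) < 0 := Real.log_neg h1z (by linarith)
  have htpos : 0 < t := by simp [htdef]; linarith
  have hEz : Real.exp (-t) = 1 - z := by
    rw [htdef, neg_neg, Real.exp_log h1z]
  have hmult : Real.exp t * Real.exp (-t) = 1 := by rw [← Real.exp_add]; simp
  have hden : (z - 1) * Real.log (1 - z) = t * Real.exp (-t) := by
    rw [hEz, htdef]; ring
  have hdenpos : 0 < t * Real.exp (-t) := by positivity
  rw [hden, div_eq_iff (ne_of_gt hdenpos)] at hzeq
  have hzval : z = 1 - Real.exp (-t) := by rw [hEz]; ring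
  have hteq : Real.exp t = 1 + (1 + lam) * t := by
    nlinarith [hzeq, hmult, hzval]
  have := ht0uniq t ⟨htpos, hteq⟩
  rw [hzval, this, ← hz0def]
end

section
/- Fix λ > 0 and let ζ = ζ₂(λ) be the unique positive solution of ζ/(1-e^{-ζ}) = 1+λ. Then the function γ(x) = (1 - e^{-xζ})/ζ solves the ODE y'(x) = φ₂((x - y)/y) with initial condition γ(1) = 1/(1+λ), where φ₂(μ) = e^{-ζ₂(μ)} for μ > 0. -/
/-!
Along the curve `γ(x) = (1 - e^{-xζ})/ζ` the slope parameter `μ = (x - γ x)/γ x` satisfies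
`1 + μ = xζ / (1 - e^{-xζ})`. Since `z ↦ z / (1 - e^{-z})` is strictly increasing on `(0, ∞)`,
the defining equation of `ζ₂` forces `ζ₂(μ) = xζ`, and `γ'(x) = e^{-xζ}` is exactly `φ₂(μ)`.
-/

open Real Set

lemma one_sub_exp_neg_pos {z : ℝ} (hz : 0 < z) : 0 < 1 - exp (-z) := by
  linarith [exp_lt_one_iff.2 (neg_neg_of_pos hz)]

lemma hasDerivAt_div_one_sub_exp_neg {z : ℝ} (hz : 0 < z) :
    HasDerivAt (fun z : ℝ => z / (1 - exp (-z)))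
      ((1 - exp (-z) - z * exp (-z)) / (1 - exp (-z)) ^ 2) z := by
  have hden : HasDerivAt (fun z : ℝ => 1 - exp (-z)) (exp (-z)) z := by
    simpa using (hasDerivAt_neg z).exp.const_sub 1
  simpa using (hasDerivAt_id' z).fun_div hden (one_sub_exp_neg_pos hz).ne'

lemma strictMonoOn_div_one_sub_exp_neg :
    StrictMonoOn (fun z : ℝ => z / (1 - exp (-z))) (Ioi 0) := by
  refine strictMonoOn_of_deriv_pos (convex_Ioi 0)
    (fun z hz => (hasDerivAt_div_one_sub_exp_neg hz).continuousAt.continuousWithinAt)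
    (fun z hz => ?_)
  rw [interior_Ioi] at hz
  rw [(hasDerivAt_div_one_sub_exp_neg hz).deriv]
  -- the numerator is `e^{-z} (e^z - 1 - z)`
  have hnum : 0 < 1 - exp (-z) - z * exp (-z) := by
    have h := mul_lt_mul_of_pos_right (add_one_lt_exp (ne_of_gt hz)) (exp_pos (-z))
    rw [← exp_add, add_neg_cancel, exp_zero] at h
    linarith
  exact div_pos hnum (pow_pos (one_sub_exp_neg_pos hz) 2)

lemma one_lt_div_one_sub_exp_neg {z : ℝ} (hz : 0 < z) : 1 < z / (1 - exp (-z)) := by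
  rw [one_lt_div (one_sub_exp_neg_pos hz)]
  linarith [add_one_lt_exp (neg_ne_zero.2 hz.ne')]

lemma hasDerivAt_one_sub_exp_neg_mul_div (ζ x : ℝ) (hζ : ζ ≠ 0) :
    HasDerivAt (fun x : ℝ => (1 - exp (-(x * ζ))) / ζ) (exp (-(x * ζ))) x :=
  ((((hasDerivAt_mul_const ζ).fun_neg.exp).const_sub 1).div_const ζ).congr_deriv (by field_simp)

/-- The field line `γ` for the Stirling-second-kind vector field: with `ζ = ζ₂(λ)` the
unique positive solution of `ζ/(1-e^{-ζ}) = 1+λ`, the curve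
`γ(x) = (1 - e^{-xζ})/ζ` satisfies `γ(1) = 1/(1+λ)` and `γ' (x) = φ₂((x-γ x)/γ x)`
where `φ₂(μ) = e^{-ζ₂(μ)}`. -/
theorem field_line_stirling2 (lam : ℝ) (hlam : 0 < lam)
    (zeta2 : ℝ → ℝ)
    (hz : ∀ mu : ℝ, 0 < mu →
      0 < zeta2 mu ∧ zeta2 mu / (1 - exp (-(zeta2 mu))) = 1 + mu)
    (γ : ℝ → ℝ) (hγ : γ = fun x => (1 - exp (-(x * zeta2 lam))) / zeta2 lam) :
    γ 1 = 1 / (1 + lam) ∧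
    ∀ x : ℝ, 0 < x → HasDerivAt γ (exp (-(zeta2 ((x - γ x) / γ x)))) x := by
  obtain ⟨hζ, hζ_eq⟩ := hz lam hlam
  subst hγ
  set ζ := zeta2 lam
  refine ⟨by simp only [one_mul]; rw [← hζ_eq, one_div_div], fun x hx => ?_⟩
  have hxζ : 0 < x * ζ := mul_pos hx hζ
  have hslope : (x - (1 - exp (-(x * ζ))) / ζ) / ((1 - exp (-(x * ζ))) / ζ)
      = x * ζ / (1 - exp (-(x * ζ))) - 1 := by
    have := hζ.ne'
    have := (one_sub_exp_neg_pos hxζ).ne'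
    field_simp
  obtain ⟨hζμ, hζμ_eq⟩ := hz _ (sub_pos.2 (one_lt_div_one_sub_exp_neg hxζ))
  have hζ₂μ : zeta2 (x * ζ / (1 - exp (-(x * ζ))) - 1) = x * ζ :=
    strictMonoOn_div_one_sub_exp_neg.injOn hζμ hxζ (by simp only [hζμ_eq, add_sub_cancel])
  simp only [hslope, hζ₂μ]
  exact hasDerivAt_one_sub_exp_neg_mul_div ζ x hζ.ne'
end

section
/- Fix λ > 0 and let ζ = ζ₃(λ) ∈ (0,1) be the unique solution of ζ/((ζ-1)ln(1-ζ)) = 1+λ. Then the function γ(x) = ((1-ζ)/ζ) · ln((1-ζ+xζ)/(1-ζ)) solves the ODE y'(x) = φ₃((x-y)/y) with γ(1) = 1/(1+λ), where φ₃(μ) = 1 - ζ₃(μ). -/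
open Real Set

/-!
The substitution `ζ = 1 - e^{-t}` turns `ζ / ((ζ - 1) ln (1 - ζ))` into the secant slope
`(e^t - 1) / t` of `exp` at `0`, which is strictly increasing for `t > 0` by convexity; hence the
defining equation of `ζ₃` has at most one solution in `(0, 1)`.

Along `γ`, put `L = ln ((1 - ζ + xζ) / (1 - ζ))` and `c = (1 - ζ) / ζ`. Then `γ x = c L` and
`x = c (e^L - 1)`, so `1 + (x - γ x) / γ x = (e^L - 1) / L`, which identifies
`ζ₃ ((x - γ x) / γ x) = 1 - e^{-L}`; and `γ' x = (1 - ζ) / (1 - ζ + xζ) = e^{-L}`.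
-/

noncomputable def stirlingRatio (z : ℝ) : ℝ := z / ((z - 1) * log (1 - z))

lemma one_lt_exp_sub_one_div {t : ℝ} (ht : 0 < t) : 1 < (exp t - 1) / t := by
  rw [one_lt_div ht]
  linarith [add_one_lt_exp ht.ne']

lemma strictMonoOn_exp_sub_one_div : StrictMonoOn (fun t => (exp t - 1) / t) (Ioi 0) := by
  intro s hs t ht hst
  simpa using strictConvexOn_exp.secant_strict_mono (mem_univ 0) (mem_univ s) (mem_univ t)
    (ne_of_gt hs) (ne_of_gt ht) hst

lemma stirlingRatio_one_sub_exp_neg {t : ℝ} (ht : t ≠ 0) :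
    stirlingRatio (1 - exp (-t)) = (exp t - 1) / t := by
  unfold stirlingRatio
  rw [sub_sub_cancel, log_exp, exp_neg]
  field_simp
  ring

lemma strictMonoOn_stirlingRatio : StrictMonoOn stirlingRatio (Ioo 0 1) := by
  have hlog {z : ℝ} (hz : z ∈ Ioo (0 : ℝ) 1) : 0 < -log (1 - z) :=
    neg_pos.2 (log_neg (by linarith [hz.2]) (by linarith [hz.1]))
  have hratio {z : ℝ} (hz : z ∈ Ioo (0 : ℝ) 1) :
      stirlingRatio z = (exp (-log (1 - z)) - 1) / (-log (1 - z)) := by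
    rw [← stirlingRatio_one_sub_exp_neg (hlog hz).ne', neg_neg, exp_log (by linarith [hz.2]),
      sub_sub_cancel]
  intro z hz w hw hzw
  rw [hratio hz, hratio hw]
  exact strictMonoOn_exp_sub_one_div (hlog hz) (hlog hw)
    (neg_lt_neg (log_lt_log (by linarith [hw.2]) (by linarith)))

lemma hasDerivAt_div_mul_log_add_mul_div {a b x : ℝ} (ha : a ≠ 0) (hb : b ≠ 0)
    (hx : a + x * b ≠ 0) :
    HasDerivAt (fun x => a / b * log ((a + x * b) / a)) (a / (a + x * b)) x := by
  have hinner : HasDerivAt (fun x => (a + x * b) / a) (b / a) x := by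
    simpa using (((hasDerivAt_id x).mul_const b).const_add a).div_const a
  refine (((hasDerivAt_log (div_ne_zero hx ha)).comp x hinner).const_mul (a / b)).congr_deriv ?_
  field_simp

/-- The field line `γ` for the Stirling-first-kind vector field: with `ζ = ζ₃(λ) ∈ (0,1)`
the unique solution of `ζ/((ζ-1)ln(1-ζ)) = 1+λ`, the curve
`γ(x) = ((1-ζ)/ζ) ln((1-ζ+xζ)/(1-ζ))` satisfies `γ(1) = 1/(1+λ)` and
`γ'(x) = φ₃((x-γ x)/γ x)` where `φ₃(μ) = 1 - ζ₃(μ)`. -/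
theorem field_line_stirling1 (lam : ℝ) (hlam : 0 < lam)
    (zeta3 : ℝ → ℝ)
    (hz : ∀ mu : ℝ, 0 < mu →
      zeta3 mu ∈ Set.Ioo (0 : ℝ) 1 ∧
        zeta3 mu / ((zeta3 mu - 1) * log (1 - zeta3 mu)) = 1 + mu)
    (γ : ℝ → ℝ)
    (hγ : γ = fun x => ((1 - zeta3 lam) / zeta3 lam) *
        log ((1 - zeta3 lam + x * zeta3 lam) / (1 - zeta3 lam))) :
    γ 1 = 1 / (1 + lam) ∧
    ∀ x : ℝ, 0 < x → HasDerivAt γ (1 - zeta3 ((x - γ x) / γ x)) x := by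
  obtain ⟨⟨hζ0, hζ1⟩, hζ⟩ := hz lam hlam
  set ζ := zeta3 lam
  have ha : 0 < 1 - ζ := sub_pos.2 hζ1
  refine ⟨?_, fun x hx => ?_⟩
  · simp only [hγ, one_mul, sub_add_cancel]
    rw [← hζ, one_div_div, log_div one_ne_zero ha.ne', log_one]
    field_simp
    ring
  have hD : 0 < 1 - ζ + x * ζ := by positivity
  set L := log ((1 - ζ + x * ζ) / (1 - ζ))
  have hL : 0 < L := log_pos ((one_lt_div ha).2 (by nlinarith))
  have hγx : γ x = (1 - ζ) / ζ * L := by rw [hγ]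
  have hx_eq : x = (1 - ζ) / ζ * (exp L - 1) := by
    rw [exp_log (by positivity)]
    field_simp
    ring
  have hμ : (x - γ x) / γ x = (exp L - 1) / L - 1 := by
    rw [hγx, hx_eq]
    field_simp
  have hζμ : zeta3 ((x - γ x) / γ x) = 1 - exp (-L) := by
    obtain ⟨hmem, hratio⟩ := hz _ (hμ ▸ sub_pos.2 (one_lt_exp_sub_one_div hL))
    refine strictMonoOn_stirlingRatio.injOn hmem ⟨?_, ?_⟩ ?_
    · simpa using exp_lt_one_iff.2 (neg_neg_of_pos hL)
    · simpa using exp_pos (-L)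
    · rw [stirlingRatio_one_sub_exp_neg hL.ne', ← sub_add_cancel ((exp L - 1) / L) 1, ← hμ]
      exact hratio.trans (add_comm _ _)
  rw [hζμ, sub_sub_cancel, exp_neg, exp_log (by positivity), inv_div, hγ]
  exact hasDerivAt_div_mul_log_add_mul_div ha.ne' hζ0.ne' hD.ne'
end

section
/- Let t ∈ (0,1), let ζ(t) be the unique solution of e^ζ/(e^ζ-1) - 1/ζ = t, and set ψ(t) = (1-t)ζ(t)e^{ζ(t)}/(e^{ζ(t)}-1). Then ζ(1-t) = -ζ(t) and ψ(1-t) = 1 - ψ(t) for all t ∈ (0,1). -/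
open Real

/-- Symmetry of the Eulerian saddle point: if `z : (0,1) → ℝ` is the (unique) solution of
`e^ζ/(e^ζ-1) - 1/ζ = t` for `t ≠ 1/2`, extended by `z(1/2) = 0`, and
`ψ(t) = (1-t) z(t) e^{z(t)}/(e^{z(t)}-1)` (extended by `ψ(1/2) = 1/2`), then
`z(1-t) = -z(t)` and `ψ(1-t) = 1 - ψ(t)`. -/
theorem eulerian_saddle_symmetry (z : ℝ → ℝ)
    (hz : ∀ t ∈ Set.Ioo (0 : ℝ) 1, t ≠ 1 / 2 →
      (z t ≠ 0 ∧ exp (z t) / (exp (z t) - 1) - 1 / z t = t) ∧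
      ∀ w : ℝ, w ≠ 0 → exp w / (exp w - 1) - 1 / w = t → w = z t)
    (hz0 : z (1 / 2) = 0)
    (ψ : ℝ → ℝ)
    (hψ : ψ = fun t => if t = 1 / 2 then 1 / 2
      else (1 - t) * z t * exp (z t) / (exp (z t) - 1)) :
    ∀ t ∈ Set.Ioo (0 : ℝ) 1, z (1 - t) = -(z t) ∧ ψ (1 - t) = 1 - ψ t := by
  subst hψ
  intro t ht
  obtain ⟨ht0, ht1⟩ := ht
  by_cases h : t = 1 / 2
  · subst h
    norm_num [hz0]
  · have h1t2 : (1 : ℝ) - t ≠ 1 / 2 := fun h' => h (by linarith)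
    obtain ⟨⟨hw0, hweq⟩, _⟩ := hz t ⟨ht0, ht1⟩ h
    obtain ⟨_, huniq'⟩ := hz (1 - t) ⟨by linarith, by linarith⟩ h1t2
    set w := z t with hwdef
    have hep : exp w ≠ 0 := (exp_pos w).ne'
    have hew : exp w - 1 ≠ 0 :=
      sub_ne_zero.mpr (fun hc => hw0 (exp_injective (by rw [hc, exp_zero])))
    have hew' : exp (-w) - 1 ≠ 0 :=
      sub_ne_zero.mpr (fun hc => hw0 (neg_eq_zero.mp (exp_injective (by rw [hc, exp_zero]))))
    have h1e : 1 - exp w ≠ 0 := fun hc => hew (by linarith)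
    have hweq' : exp w - 1 - t * w = w * exp w - t * w * exp w := by
      field_simp at hweq
      linarith [hweq]
    have key : exp (-w) / (exp (-w) - 1) - 1 / (-w) = 1 - t := by
      have hid : exp (-w) / (exp (-w) - 1) - 1 / (-w)
          = 1 - (exp w / (exp w - 1) - 1 / w) := by
        rw [exp_neg] at hew' ⊢
        field_simp [h1e, hw0]
        ring
      rw [hid, hweq]
    have hz1t : z (1 - t) = -w := (huniq' (-w) (neg_ne_zero.mpr hw0) key).symm
    refine ⟨hz1t, ?_⟩
    simp only [h1t2, h, if_false, hz1t, ← hwdef]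
    rw [exp_neg] at hew' ⊢
    field_simp [h1e, hw0]
    linear_combination (exp w - 1) * hweq'
end
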